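/- arXiv:2410.15540 — 4 statements merged into one kernel-verified Lean document; each statement's English description precedes it below -/
import Mathlib

section
/- Let l ≥ 1 be an integer, U ⊆ ℝ^l open, f : U → ℝ continuously differentiable, b ∈ U with f(b) > 0, and t₀ > 0. Assume there are constants K > 0 and γ ∈ (0, 1/2] such that ‖∇f(y)‖ ≥ K · |f(y)|^{1−γ} for every y ∈ U. Let v : [0, t₀] → U be differentiable with v(0) = b such that for every t ∈ [0, t₀]: v′(t) = −∇f(v(t))/‖∇f(v(t))‖ if f(v(t)) > f(b)/2, and v′(t) = 0 otherwise. Then: (i) the function t ↦ f(v(t)) is non-increasing on [0, t₀]; and (ii) for every t ∈ [0, t₀] such that f(v(s)) > f(b)/2 for all s ∈ [0, t), one has f(v(t)) ≤ f(b) − K · (f(b)/2)^{1−γ} · t. -/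
/-!
By the chain rule, `d/dt f(v t) = ⟪∇f, -∇f/‖∇f‖⟫ = -‖∇f(v t)‖` while the flow runs and `0`
once it is stopped, so `f ∘ v` is non-increasing. While `f(v t) > f(b)/2`, the Łojasiewicz
bound turns this into `d/dt f(v t) ≤ -K (f(b)/2)^{1-γ}`, and the linear decay follows by
comparison with the line of that slope.
-/

open Set

section NormalizedGradientFlow

variable {E : Type*} [NormedAddCommGroup E] [InnerProductSpace ℝ E]

-- Also true for `g = 0`, where `‖g‖⁻¹ = 0`.
lemma real_inner_neg_inv_norm_smul_self (g : E) :
    inner ℝ g (-(‖g‖⁻¹ • g)) = -‖g‖ := by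
  rw [inner_neg_right, real_inner_smul_right, real_inner_self_eq_norm_sq]
  rcases eq_or_ne ‖g‖ 0 with h | h
  · simp [h]
  · field_simp

variable [CompleteSpace E]

lemma hasDerivAt_comp_of_hasDerivAt_ite_neg_normalized_gradient {f : E → ℝ} {v : ℝ → E}
    {t : ℝ} {p : Prop} [Decidable p] (hf : DifferentiableAt ℝ f (v t))
    (hv : HasDerivAt v (if p then -(‖gradient f (v t)‖⁻¹ • gradient f (v t)) else 0) t) :
    HasDerivAt (fun s => f (v s)) (if p then -‖gradient f (v t)‖ else 0) t := by
  have hcomp : HasDerivAt (fun s => f (v s)) (inner ℝ (gradient f (v t))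
      (if p then -(‖gradient f (v t)‖⁻¹ • gradient f (v t)) else 0)) t :=
    hf.hasGradientAt.hasFDerivAt.comp_hasDerivAt t hv
  split_ifs at hcomp ⊢ <;>
    simpa only [real_inner_neg_inv_norm_smul_self, inner_zero_right] using hcomp

lemma mul_rpow_le_norm_gradient_of_lt {f : E → ℝ} {y : E} {K γ a : ℝ} (hK : 0 ≤ K)
    (hγ : γ ≤ 1) (ha : 0 ≤ a) (hay : a < f y)
    (hgrad : K * |f y| ^ (1 - γ) ≤ ‖gradient f y‖) :
    K * a ^ (1 - γ) ≤ ‖gradient f y‖ := by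
  refine le_trans (mul_le_mul_of_nonneg_left ?_ hK) hgrad
  rw [abs_of_pos (ha.trans_lt hay)]
  exact Real.rpow_le_rpow ha hay.le (by linarith)

end NormalizedGradientFlow

lemma le_sub_mul_of_hasDerivAt_le_neg {g g' : ℝ → ℝ} {a t c : ℝ} (hat : a ≤ t)
    (hg : ∀ s ∈ Icc a t, HasDerivAt g (g' s) s) (hg' : ∀ s ∈ Ico a t, g' s ≤ -c) :
    g t ≤ g a - c * (t - a) := by
  refine image_le_of_deriv_right_le_deriv_boundary
    (B := fun s => g a - c * (s - a)) (B' := fun _ => -c)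
    (fun s hs => (hg s hs).continuousAt.continuousWithinAt)
    (fun s hs => (hg s (Ico_subset_Icc_self hs)).hasDerivWithinAt) (by simp) (by fun_prop)
    (fun s _ => ?_) hg' (right_mem_Icc.mpr hat)
  simpa using (((hasDerivAt_id s).sub_const a).const_mul c).const_sub (g a) |>.hasDerivWithinAt

theorem stmt_1_general (l : ℕ) (U : Set (EuclideanSpace ℝ (Fin l))) (hU : IsOpen U)
    (f : EuclideanSpace ℝ (Fin l) → ℝ) (hf : ContDiffOn ℝ 1 f U)
    (b : EuclideanSpace ℝ (Fin l)) (hfb : 0 < f b)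
    (t₀ : ℝ) (K γ : ℝ) (hK : 0 < K) (hγ : γ ∈ Set.Ioc (0 : ℝ) (1 / 2))
    (hgrad : ∀ y ∈ U, K * |f y| ^ (1 - γ) ≤ ‖gradient f y‖)
    (v : ℝ → EuclideanSpace ℝ (Fin l)) (hv0 : v 0 = b)
    (hvU : ∀ t ∈ Set.Icc 0 t₀, v t ∈ U)
    (hv' : ∀ t ∈ Set.Icc 0 t₀,
      HasDerivAt v
        (if f b / 2 < f (v t) then -(‖gradient f (v t)‖⁻¹ • gradient f (v t)) else 0) t) :
    AntitoneOn (fun t => f (v t)) (Set.Icc 0 t₀) ∧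
      ∀ t ∈ Set.Icc 0 t₀, (∀ s ∈ Set.Ico 0 t, f b / 2 < f (v s)) →
        f (v t) ≤ f b - K * (f b / 2) ^ (1 - γ) * t := by
  have hflow : ∀ t ∈ Icc 0 t₀, HasDerivAt (fun s => f (v s))
      (if f b / 2 < f (v t) then -‖gradient f (v t)‖ else 0) t := fun t ht =>
    hasDerivAt_comp_of_hasDerivAt_ite_neg_normalized_gradient
      ((hf.contDiffAt (hU.mem_nhds (hvU t ht))).differentiableAt one_ne_zero) (hv' t ht)
  refine ⟨fun s hs t ht hst => ?_, fun t ht hrun => ?_⟩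
  · have hdecay := le_sub_mul_of_hasDerivAt_le_neg (c := 0) hst
      (fun x hx => hflow x ⟨hs.1.trans hx.1, hx.2.trans ht.2⟩)
      (fun x _ => by split_ifs <;> simp)
    simpa using hdecay
  · have hdecay := le_sub_mul_of_hasDerivAt_le_neg (c := K * (f b / 2) ^ (1 - γ)) ht.1
      (fun x hx => hflow x ⟨hx.1, hx.2.trans ht.2⟩) (fun x hx => ?_)
    · simpa [hv0] using hdecay
    · rw [if_pos (hrun x hx), neg_le_neg_iff]
      exact mul_rpow_le_norm_gradient_of_lt hK.le (by linarith [hγ.2]) (by linarith)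
        (hrun x hx) (hgrad _ (hvU x ⟨hx.1, hx.2.le.trans ht.2⟩))

/-- Quantitative decay along the normalized gradient flow (Section 4 of the paper).
`v` is the normalized gradient flow of `f` starting at `b`, stopped once `f` drops to
half its initial value; under the Łojasiewicz-type bound `‖∇f‖ ≥ K |f|^{1-γ}` on `U`,
(i) `t ↦ f (v t)` is non-increasing on `[0, t₀]`, and (ii) as long as the flow has not been
stopped, `f (v t) ≤ f b - K (f b / 2)^{1-γ} t`. -/
theorem stmt_1 (l : ℕ) (hl : 1 ≤ l) (U : Set (EuclideanSpace ℝ (Fin l))) (hU : IsOpen U)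
    (f : EuclideanSpace ℝ (Fin l) → ℝ) (hf : ContDiffOn ℝ 1 f U)
    (b : EuclideanSpace ℝ (Fin l)) (hb : b ∈ U) (hfb : 0 < f b)
    (t₀ : ℝ) (ht₀ : 0 < t₀) (K γ : ℝ) (hK : 0 < K) (hγ : γ ∈ Set.Ioc (0 : ℝ) (1 / 2))
    (hgrad : ∀ y ∈ U, K * |f y| ^ (1 - γ) ≤ ‖gradient f y‖)
    (v : ℝ → EuclideanSpace ℝ (Fin l)) (hv0 : v 0 = b)
    (hvU : ∀ t ∈ Set.Icc 0 t₀, v t ∈ U)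
    (hv' : ∀ t ∈ Set.Icc 0 t₀,
      HasDerivAt v
        (if f b / 2 < f (v t) then -(‖gradient f (v t)‖⁻¹ • gradient f (v t)) else 0) t) :
    AntitoneOn (fun t => f (v t)) (Set.Icc 0 t₀) ∧
      ∀ t ∈ Set.Icc 0 t₀, (∀ s ∈ Set.Ico 0 t, f b / 2 < f (v s)) →
        f (v t) ≤ f b - K * (f b / 2) ^ (1 - γ) * t :=
  stmt_1_general l U hU f hf b hfb t₀ K γ hK hγ hgrad v hv0 hvU hv'
end

section
/- Let n ≥ 5 be an integer, d > 0, C > 0, α > 0, let f : (0, d) → ℝ be nondecreasing, and let u : (0, d) → [0, ∞) be Lebesgue measurable. Assume that for Lebesgue-almost every r ∈ (0, d), f is differentiable at r and f′(r) ≥ ((n−4)/r) · f(r) + u(r) − C · r^{n−5+α}. Then for all 0 < σ < ρ < d one has ∫_σ^ρ u(r) · r^{−(n−4)} dr ≤ f(ρ)/ρ^{n−4} − f(σ)/σ^{n−4} + (C/α) · ρ^α. -/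
/-!
Dividing the differential inequality by `r ^ p`, `p = n - 4`, gives almost everywhere
`u r⁻ᵖ ≤ (f r⁻ᵖ)' + C r^(α-1)` with the pointwise derivative `(f r⁻ᵖ)' = f' r⁻ᵖ - p f r⁻ᵖ⁻¹`,
which is then integrated from `σ` to `ρ`. Since `f` may jump, the integral of this pointwise
derivative is not the increment of `f r⁻ᵖ`; but the jumps of a monotone `f` are upward, so it is at
most that increment: for `f` monotone and `φ ≥ 0` decreasing and `C¹`, the function `f φ - ∫ f φ'`
is monotone with a.e. derivative `f' φ`, and the derivative of a monotone function integrates to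
at most its increment.
-/

open MeasureTheory Set

section WeightedMonotone

variable {f φ φ' : ℝ → ℝ} {a b : ℝ}

lemma MonotoneOn.intervalIntegrable_mul_continuousOn (hf : MonotoneOn f (Icc a b))
    (hφ' : ContinuousOn φ' (Icc a b)) {c d : ℝ} (hc : c ∈ Icc a b) (hd : d ∈ Icc a b) :
    IntervalIntegrable (fun t => f t * φ' t) volume c d :=
  (hf.mono (uIcc_subset_Icc hc hd)).intervalIntegrable.mul_continuousOn
    (hφ'.mono (uIcc_subset_Icc hc hd))

lemma MonotoneOn.intervalIntegrable_deriv_mul_continuousOn (hab : a ≤ b)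
    (hf : MonotoneOn f (Icc a b)) (hφ : ContinuousOn φ (Icc a b)) :
    IntervalIntegrable (fun x => deriv f x * φ x) volume a b :=
  (uIcc_of_le hab ▸ hf).intervalIntegrable_deriv.mul_continuousOn (uIcc_of_le hab ▸ hφ)

lemma MonotoneOn.monotoneOn_mul_sub_integral (hf : MonotoneOn f (Icc a b))
    (hφ : ∀ x ∈ Icc a b, HasDerivAt φ (φ' x) x) (hφ' : ContinuousOn φ' (Icc a b))
    (hφ_nonneg : ∀ x ∈ Icc a b, 0 ≤ φ x) (hφ'_nonpos : ∀ x ∈ Icc a b, φ' x ≤ 0) :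
    MonotoneOn (fun x => f x * φ x - ∫ t in a..x, f t * φ' t) (Icc a b) := by
  intro x hx y hy hxy
  have ha : a ∈ Icc a b := ⟨le_rfl, hx.1.trans hx.2⟩
  have hsub : Icc x y ⊆ Icc a b := Icc_subset_Icc hx.1 hy.2
  have hφ_sub : ∫ t in x..y, φ' t = φ y - φ x :=
    intervalIntegral.integral_eq_sub_of_hasDerivAt (fun t ht => hφ t (uIcc_subset_Icc hx hy ht))
      (hφ'.mono (uIcc_subset_Icc hx hy)).intervalIntegrable
  have hbound : ∫ t in x..y, f t * φ' t ≤ f x * (φ y - φ x) := by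
    rw [← hφ_sub, ← intervalIntegral.integral_const_mul]
    refine intervalIntegral.integral_mono_on hxy
      (hf.intervalIntegrable_mul_continuousOn hφ' hx hy)
      ((hφ'.mono (uIcc_subset_Icc hx hy)).intervalIntegrable.const_mul _) fun t ht => ?_
    exact mul_le_mul_of_nonpos_right (hf hx (hsub ht) ht.1) (hφ'_nonpos t (hsub ht))
  have hsplit := intervalIntegral.integral_interval_sub_left
    (hf.intervalIntegrable_mul_continuousOn hφ' ha hy)
    (hf.intervalIntegrable_mul_continuousOn hφ' ha hx)
  have hjump : 0 ≤ (f y - f x) * φ y :=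
    mul_nonneg (sub_nonneg.2 (hf hx hy hxy)) (hφ_nonneg y hy)
  simp only
  linarith

lemma MonotoneOn.hasDerivAt_mul_sub_integral (hf : MonotoneOn f (Icc a b))
    (hφ : ∀ x ∈ Icc a b, HasDerivAt φ (φ' x) x) (hφ' : ContinuousOn φ' (Icc a b)) {x : ℝ}
    (hx : x ∈ Ioo a b) (hfx : DifferentiableAt ℝ f x) :
    HasDerivAt (fun x => f x * φ x - ∫ t in a..x, f t * φ' t) (deriv f x * φ x) x := by
  have hab : a ≤ b := (hx.1.trans hx.2).le
  have hint := hf.intervalIntegrable_mul_continuousOn hφ' (left_mem_Icc.2 hab) (right_mem_Icc.2 hab)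
  have hmeas : StronglyMeasurableAtFilter (fun t => f t * φ' t) (nhds x) volume :=
    ⟨Ioo a b, Ioo_mem_nhds hx.1 hx.2,
      ((intervalIntegrable_iff_integrableOn_Ioo_of_le hab).1 hint).aestronglyMeasurable⟩
  have hI : HasDerivAt (fun x => ∫ t in a..x, f t * φ' t) (f x * φ' x) x :=
    intervalIntegral.integral_hasDerivAt_right
      (hf.intervalIntegrable_mul_continuousOn hφ' (left_mem_Icc.2 hab) (Ioo_subset_Icc_self hx))
      hmeas (hfx.continuousAt.mul (hφ'.continuousAt (Icc_mem_nhds hx.1 hx.2)))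
  exact ((hfx.hasDerivAt.mul (hφ x (Ioo_subset_Icc_self hx))).sub hI).congr_deriv (by ring)

theorem MonotoneOn.integral_deriv_mul_add_mul_deriv_le (hab : a ≤ b)
    (hf : MonotoneOn f (Icc a b)) (hφ : ∀ x ∈ Icc a b, HasDerivAt φ (φ' x) x)
    (hφ' : ContinuousOn φ' (Icc a b)) (hφ_nonneg : ∀ x ∈ Icc a b, 0 ≤ φ x)
    (hφ'_nonpos : ∀ x ∈ Icc a b, φ' x ≤ 0) :
    ∫ x in a..b, (deriv f x * φ x + f x * φ' x) ≤ f b * φ b - f a * φ a := by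
  set H := fun x => f x * φ x - ∫ t in a..x, f t * φ' t with hH_def
  have hH : MonotoneOn H (Icc a b) :=
    hf.monotoneOn_mul_sub_integral hφ hφ' hφ_nonneg hφ'_nonpos
  have hdiff : ∀ᵐ x, x ∈ Ioo a b → DifferentiableAt ℝ f x := by
    filter_upwards [(hf.mono Ioo_subset_Icc_self).ae_differentiableWithinAt_of_mem] with x hx hxab
    exact (hx hxab).differentiableAt (Ioo_mem_nhds hxab.1 hxab.2)
  have hderiv_H : ∫ x in a..b, deriv H x = ∫ x in a..b, deriv f x * φ x := by
    refine intervalIntegral.integral_congr_ae ?_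
    filter_upwards [hdiff, Measure.ae_ne volume b] with x hfx hxb hx
    rw [uIoc_of_le hab] at hx
    have hx' : x ∈ Ioo a b := ⟨hx.1, hx.2.lt_of_ne hxb⟩
    exact (hf.hasDerivAt_mul_sub_integral hφ hφ' hx' (hfx hx')).deriv
  have hjump : ∫ x in a..b, deriv H x ≤ H b - H a := by
    have hmem := (uIcc_of_le hab ▸ hH).intervalIntegral_deriv_mem_uIcc
    rw [uIcc_of_le (sub_nonneg.2 (hH (left_mem_Icc.2 hab) (right_mem_Icc.2 hab) hab))] at hmem
    exact hmem.2
  have hfφ' :=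
    hf.intervalIntegrable_mul_continuousOn hφ' (left_mem_Icc.2 hab) (right_mem_Icc.2 hab)
  have hf'φ := hf.intervalIntegrable_deriv_mul_continuousOn hab
    fun x hx => (hφ x hx).continuousAt.continuousWithinAt
  rw [intervalIntegral.integral_add hf'φ hfφ', ← hderiv_H]
  simp only [hH_def, intervalIntegral.integral_same, sub_zero] at hjump
  linarith

end WeightedMonotone

lemma MonotoneOn.integral_deriv_mul_rpow_neg_le {f : ℝ → ℝ} {p σ ρ : ℝ} (hp : 0 ≤ p)
    (hσ : 0 < σ) (hσρ : σ ≤ ρ) (hf : MonotoneOn f (Icc σ ρ)) :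
    IntervalIntegrable (fun r => deriv f r * r ^ (-p) + f r * (-p * r ^ (-p - 1))) volume σ ρ ∧
      ∫ r in σ..ρ, (deriv f r * r ^ (-p) + f r * (-p * r ^ (-p - 1)))
        ≤ f ρ * ρ ^ (-p) - f σ * σ ^ (-p) := by
  have hpos : ∀ r ∈ Icc σ ρ, r ≠ 0 := fun r hr => (hσ.trans_le hr.1).ne'
  have hφ' : ContinuousOn (fun r : ℝ => -p * r ^ (-p - 1)) (Icc σ ρ) :=
    continuousOn_const.mul (continuousOn_id.rpow_const fun r hr => Or.inl (hpos r hr))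
  refine ⟨(hf.intervalIntegrable_deriv_mul_continuousOn hσρ
      (continuousOn_id.rpow_const fun r hr => Or.inl (hpos r hr))).add
      (hf.intervalIntegrable_mul_continuousOn hφ' (left_mem_Icc.2 hσρ) (right_mem_Icc.2 hσρ)), ?_⟩
  refine hf.integral_deriv_mul_add_mul_deriv_le hσρ
    (fun r hr => Real.hasDerivAt_rpow_const (Or.inl (hpos r hr))) hφ'
    (fun r hr => (Real.rpow_pos_of_pos (hσ.trans_le hr.1) _).le) fun r hr => ?_
  exact mul_nonpos_of_nonpos_of_nonneg (neg_nonpos.2 hp)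
    (Real.rpow_pos_of_pos (hσ.trans_le hr.1) _).le

lemma mul_rpow_neg_le_of_le {p r α C y y' v : ℝ} (hr : 0 < r)
    (h : p / r * y + v - C * r ^ (p - 1 + α) ≤ y') :
    v * r ^ (-p) ≤ y' * r ^ (-p) + y * (-p * r ^ (-p - 1)) + C * r ^ (α - 1) := by
  have hweighted := mul_le_mul_of_nonneg_right h (Real.rpow_pos_of_pos hr (-p)).le
  have hexp : r ^ (p - 1 + α) * r ^ (-p) = r ^ (α - 1) := by
    rw [← Real.rpow_add hr]; ring_nf
  have hexpand : (p / r * y + v - C * r ^ (p - 1 + α)) * r ^ (-p)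
      = v * r ^ (-p) - y * (-p * (r ^ (-p) / r)) - C * (r ^ (p - 1 + α) * r ^ (-p)) := by
    ring
  rw [hexpand, hexp] at hweighted
  rw [Real.rpow_sub_one hr.ne' (-p)]
  linarith

theorem stmt_4_general (n : ℕ) (hn : 5 ≤ n) (d C α : ℝ) (hC : 0 < C) (hα : 0 < α)
    (f u : ℝ → ℝ) (hf : MonotoneOn f (Set.Ioo 0 d))
    (hu0 : ∀ r ∈ Set.Ioo (0 : ℝ) d, 0 ≤ u r)
    (hder : ∀ᵐ r ∂(volume : Measure ℝ), r ∈ Set.Ioo (0 : ℝ) d →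
      DifferentiableAt ℝ f r ∧
        ((n : ℝ) - 4) / r * f r + u r - C * r ^ ((n : ℝ) - 5 + α) ≤ deriv f r) :
    ∀ σ ρ : ℝ, 0 < σ → σ < ρ → ρ < d →
      ∫ r in Set.Ioc σ ρ, u r / r ^ (n - 4)
        ≤ f ρ / ρ ^ (n - 4) - f σ / σ ^ (n - 4) + C / α * ρ ^ α := by
  intro σ ρ hσ hσρ hρd
  set p : ℝ := (n : ℝ) - 4 with hp_def
  have hp : 0 ≤ p := by rw [hp_def, sub_nonneg]; exact_mod_cast (by omega : 4 ≤ n)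
  have hpow : ∀ r : ℝ, r ^ (n - 4) = r ^ p := fun r => by
    rw [← Real.rpow_natCast, Nat.cast_sub (by omega : 4 ≤ n), Nat.cast_ofNat]
  have hexp : (n : ℝ) - 5 + α = p - 1 + α := by ring
  obtain ⟨hint, hweighted⟩ :=
    (hf.mono (Icc_subset_Ioo hσ hρd)).integral_deriv_mul_rpow_neg_le hp hσ hσρ.le
  have hint_power := (intervalIntegral.intervalIntegrable_rpow' (a := σ) (b := ρ)
    (by linarith : -1 < α - 1)).const_mul C
  have hpower : ∫ r in σ..ρ, C * r ^ (α - 1) = C / α * ρ ^ α - C / α * σ ^ α := by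
    rw [intervalIntegral.integral_const_mul, integral_rpow (Or.inl (by linarith)), sub_add_cancel]
    ring
  have hmem : ∀ r ∈ Ioc σ ρ, r ∈ Ioo 0 d := fun r hr => ⟨hσ.trans hr.1, hr.2.trans_lt hρd⟩
  calc ∫ r in Ioc σ ρ, u r / r ^ (n - 4)
      ≤ ∫ r in Ioc σ ρ,
          (deriv f r * r ^ (-p) + f r * (-p * r ^ (-p - 1)) + C * r ^ (α - 1)) := by
        refine integral_mono_of_nonneg ?_
          ((intervalIntegrable_iff_integrableOn_Ioc_of_le hσρ.le).1 (hint.add hint_power)) ?_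
        · filter_upwards [ae_restrict_mem measurableSet_Ioc] with r hr
          exact div_nonneg (hu0 r (hmem r hr)) (pow_nonneg (hmem r hr).1.le _)
        · filter_upwards [ae_restrict_mem measurableSet_Ioc, ae_restrict_of_ae hder] with r hr hdr
          rw [hpow, div_eq_mul_inv, ← Real.rpow_neg (hmem r hr).1.le]
          exact mul_rpow_neg_le_of_le (hmem r hr).1 (hexp ▸ (hdr (hmem r hr)).2)
    _ = (∫ r in σ..ρ, (deriv f r * r ^ (-p) + f r * (-p * r ^ (-p - 1))))
          + ∫ r in σ..ρ, C * r ^ (α - 1) := by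
        rw [← intervalIntegral.integral_add hint hint_power, intervalIntegral.integral_of_le hσρ.le]
    _ ≤ f ρ / ρ ^ (n - 4) - f σ / σ ^ (n - 4) + C / α * ρ ^ α := by
        rw [hpow, hpow, div_eq_mul_inv, div_eq_mul_inv,
          ← Real.rpow_neg (hσ.trans hσρ).le, ← Real.rpow_neg hσ.le]
        have : 0 ≤ C / α * σ ^ α := by positivity
        linarith

/-- One-variable differential-inequality lemma, the analytic core of the almost
monotonicity formula (Proposition 2.4): if `f` is nondecreasing on `(0, d)`, `u ≥ 0`
is measurable, and for a.e. `r ∈ (0, d)` the function `f` is differentiable at `r` with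
`f'(r) ≥ (n-4)/r · f(r) + u(r) - C r^{n-5+α}`, then for all `0 < σ < ρ < d`,
`∫_σ^ρ u(r) r^{-(n-4)} dr ≤ f(ρ)/ρ^{n-4} - f(σ)/σ^{n-4} + (C/α) ρ^α`. -/
theorem stmt_4 (n : ℕ) (hn : 5 ≤ n) (d C α : ℝ) (hd : 0 < d) (hC : 0 < C) (hα : 0 < α)
    (f u : ℝ → ℝ) (hf : MonotoneOn f (Set.Ioo 0 d)) (hu : Measurable u)
    (hu0 : ∀ r ∈ Set.Ioo (0 : ℝ) d, 0 ≤ u r)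
    (hder : ∀ᵐ r ∂(volume : Measure ℝ), r ∈ Set.Ioo (0 : ℝ) d →
      DifferentiableAt ℝ f r ∧
        ((n : ℝ) - 4) / r * f r + u r - C * r ^ ((n : ℝ) - 5 + α) ≤ deriv f r) :
    ∀ σ ρ : ℝ, 0 < σ → σ < ρ → ρ < d →
      ∫ r in Set.Ioc σ ρ, u r / r ^ (n - 4)
        ≤ f ρ / ρ ^ (n - 4) - f σ / σ ^ (n - 4) + C / α * ρ ^ α :=
  stmt_4_general n hn d C α hC hα f u hf hu0 hder
end

section
/- Let n ≥ 5 be an integer, γ ∈ (0, 1), ε ∈ (0, 1), C₀ > 0, α₀ > 0 and ρ̃ ∈ (0, 1]. Let f : (0, ρ̃] → [0, ∞) be nondecreasing and set e(ρ) := f(ρ)/ρ^{n−4}. Assume that for Lebesgue-almost every ρ ∈ (0, ρ̃), f is differentiable at ρ and f(ρ) ≤ (1 − ε · |e(ρ) − C₀ρ^{α₀}|^{γ}) · (ρ/(n−4)) · f′(ρ) + C₀ · ρ^{n−4+α₀}. Then there exists a constant C > 0, depending only on n, γ, ε, C₀ and α₀, such that e(ρ) ≤ C · (log(ρ̃/ρ))^{−1/γ}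 for every ρ ∈ (0, ρ̃/2]. -/
/-!
Argue by contradiction with an upper barrier. Put `m = n - 4`, `L = log (ρ̃ / ρ)` and
`r = ρ e^{L/2}`, and let `β(x) = x^m (2 C₀ x^α₀ + K log (r / x) ^ (-1/γ))`. Where `β ≤ f`, the
excess `g = e - C₀ x^α₀` is at least `C₀ x^α₀ + K log (r / x) ^ (-1/γ)`, and the differential
inequality forces `f' ≥ (m / x) x^m (g + ε g^{1+γ})`; for `K` large this dominates `β'`, because
`x^α₀ log (r / x) ^ (1 + 1/γ)` is bounded. If `e(ρ) > C L^{-1/γ}` then `β(ρ) < f(ρ)`, and since a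
monotone function grows at least by the integral of its derivative, `f` stays above `β` on
`[ρ, r)`. This is absurd, because `β → ∞` at `r` while `f ≤ f(ρ̃)`.
-/

open MeasureTheory Set Filter Topology Real

theorem rpow_mul_log_div_rpow_le {x r α q : ℝ} (hx : 0 < x) (hxr : x ≤ r) (hα : 0 < α)
    (hq : 0 < q) : x ^ α * log (r / x) ^ q ≤ (q / α) ^ q * r ^ α := by
  have hr : 0 < r := hx.trans_le hxr
  have hrx : 0 < r / x := div_pos hr hx
  have hlog : log (r / x) ≤ q / α * (r / x) ^ (α / q) := by
    refine (log_le_rpow_div hrx.le (div_pos hα hq)).trans_eq ?_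
    field_simp
  calc x ^ α * log (r / x) ^ q ≤ x ^ α * (q / α * (r / x) ^ (α / q)) ^ q := by
        gcongr
        exact log_nonneg ((one_le_div hx).2 hxr)
    _ = (q / α) ^ q * r ^ α := by
        rw [mul_rpow (by positivity) (by positivity), ← rpow_mul hrx.le,
          div_mul_cancel₀ _ hq.ne', div_rpow hr.le hx.le]
        field_simp

theorem mul_one_add_le_of_le_one_sub_mul {u δ D : ℝ} (hu : 0 < u) (hD : 0 ≤ D)
    (h : u ≤ (1 - δ) * D) : u * (1 + δ) ≤ D := by
  have hδ : 0 < 1 - δ := by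
    by_contra! hδ
    linarith [mul_nonpos_of_nonpos_of_nonneg hδ hD]
  refine le_of_mul_le_mul_right ?_ hδ
  nlinarith [sq_nonneg δ]

theorem MonotoneOn.sub_le_sub_of_hasDerivAt {f β β' : ℝ → ℝ} {a b : ℝ} (hab : a ≤ b)
    (hf : MonotoneOn f (Icc a b)) (hβ : ∀ x ∈ Icc a b, HasDerivAt β (β' x) x)
    (hβ' : IntervalIntegrable β' volume a b)
    (hle : ∀ᵐ x, x ∈ Ioo a b → β' x ≤ deriv f x) : β b - β a ≤ f b - f a := by
  rw [← uIcc_of_le hab] at hf hβ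
  calc β b - β a = ∫ x in a..b, β' x :=
        (intervalIntegral.integral_eq_sub_of_hasDerivAt hβ hβ').symm
    _ ≤ ∫ x in a..b, deriv f x := by
        refine intervalIntegral.integral_mono_ae_restrict hab hβ' hf.intervalIntegrable_deriv ?_
        rw [EventuallyLE, ← Measure.restrict_congr_set Ioo_ae_eq_Icc,
          ae_restrict_iff' measurableSet_Ioo]
        exact hle
    _ ≤ f b - f a := by
        have := hf.intervalIntegral_deriv_mem_uIcc
        rw [uIcc_of_le (sub_nonneg.2 (hf (by simp) (by simp) hab))] at this
        exact this.2

theorem MonotoneOn.le_of_hasDerivAt_le_deriv {f β β' : ℝ → ℝ} {a c : ℝ} (hac : a ≤ c)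
    (hf : MonotoneOn f (Icc a c)) (hβ : ∀ x ∈ Icc a c, HasDerivAt β (β' x) x)
    (hβ' : IntervalIntegrable β' volume a c)
    (hle : ∀ᵐ x, x ∈ Ioo a c → β x ≤ f x → β' x ≤ deriv f x) (ha : β a < f a) :
    β c ≤ f c := by
  by_contra! hc
  set S := {x ∈ Icc a c | f x < β x}
  have hSne : S.Nonempty := ⟨c, ⟨hac, le_rfl⟩, hc⟩
  have hSbdd : BddBelow S := ⟨a, fun x hx => hx.1.1⟩
  set t := sInf S
  have hat : a ≤ t := le_csInf hSne fun x hx => hx.1.1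
  have htc : t ≤ c := csInf_le hSbdd ⟨⟨hac, le_rfl⟩, hc⟩
  have hIcc : Icc a t ⊆ Icc a c := Icc_subset_Icc_right htc
  have hbelow : ∀ x ∈ Ioo a t, β x ≤ f x := fun x hx => by
    by_contra! hx'
    exact hx.2.not_ge (csInf_le hSbdd ⟨⟨hx.1.le, hx.2.le.trans htc⟩, hx'⟩)
  have hgrowth : β t - β a ≤ f t - f a := by
    refine (hf.mono hIcc).sub_le_sub_of_hasDerivAt hat (fun x hx => hβ x (hIcc hx))
      (hβ'.mono_set (by simpa [uIcc_of_le hat, uIcc_of_le hac] using hIcc)) ?_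
    filter_upwards [hle] with x hx hxt
    exact hx ⟨hxt.1, hxt.2.trans_le htc⟩ (hbelow x hxt)
  -- `t` is a limit of points `x ≥ t` where `f t ≤ f x < β x`.
  have hft : f t ≤ β t := by
    have hβS : β '' S ⊆ Ici (f t) := by
      rintro _ ⟨x, hx, rfl⟩
      exact (hf ⟨hat, htc⟩ hx.1 (csInf_le hSbdd hx)).trans hx.2.le
    exact isClosed_Ici.closure_subset_iff.2 hβS
      (mem_closure_image (hβ t ⟨hat, htc⟩).continuousAt (csInf_mem_closure hSne hSbdd))
  linarith

section Barrier

variable (m : ℕ) (C₀ α K γ r : ℝ)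

noncomputable def barrier (x : ℝ) : ℝ :=
  x ^ m * (2 * C₀ * x ^ α + K * log (r / x) ^ (-(1 / γ)))

noncomputable def barrierDeriv (x : ℝ) : ℝ :=
  x ^ m / x * (2 * C₀ * (m + α) * x ^ α
    + K * (m * log (r / x) ^ (-(1 / γ)) + log (r / x) ^ (-(1 / γ) - 1) / γ))

variable {m C₀ α K γ r}

theorem hasDerivAt_barrier {x : ℝ} (hx : 0 < x) (hxr : x < r) :
    HasDerivAt (barrier m C₀ α K γ r) (barrierDeriv m C₀ α K γ r x) x := by
  have hs : 0 < log (r / x) := log_pos ((one_lt_div hx).2 hxr)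
  have hlog : HasDerivAt (fun y => log (r / y)) (-x⁻¹) x := by
    refine (((hasDerivAt_const x r).div (hasDerivAt_id x) hx.ne').log
      (div_pos (hx.trans hxr) hx).ne').congr_deriv ?_
    have hr : r ≠ 0 := (hx.trans hxr).ne'
    simp only [id, Pi.div_apply]
    field_simp
    ring
  have hpow : (m : ℝ) * x ^ (m - 1) = m * x ^ m / x := by
    rcases m with _ | m
    · simp
    · field_simp
      simp [pow_succ]
  refine ((hasDerivAt_pow m x).mul (((hasDerivAt_rpow_const (p := α) (Or.inl hx.ne')).const_mul
    (2 * C₀)).add ((hlog.rpow_const (p := -(1 / γ)) (Or.inl hs.ne')).const_mul K))).congr_deriv ?_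
  simp only [Pi.add_apply, hpow, barrierDeriv, rpow_sub_one hx.ne', rpow_sub_one hs.ne']
  field_simp
  ring

theorem continuousOn_barrierDeriv {a b : ℝ} (ha : 0 < a) (hbr : b < r) :
    ContinuousOn (barrierDeriv m C₀ α K γ r) (Icc a b) := by
  intro x hx
  have hx0 : 0 < x := ha.trans_le hx.1
  have hs : 0 < log (r / x) := log_pos ((one_lt_div hx0).2 (hx.2.trans_lt hbr))
  unfold barrierDeriv
  apply ContinuousAt.continuousWithinAt
  fun_prop (disch := simp [hx0.ne', hs.ne', (hx0.trans (hx.2.trans_lt hbr)).ne'])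

theorem tendsto_barrier_nhdsLT (hr : 0 < r) (hK : 0 < K) (hγ : 0 < γ) :
    Tendsto (barrier m C₀ α K γ r) (𝓝[<] r) atTop := by
  have hlog : Tendsto (fun x => log (r / x)) (𝓝[<] r) (𝓝[>] 0) := by
    refine tendsto_nhdsWithin_of_tendsto_nhds_of_eventually_within _ ?_ ?_
    · have : ContinuousAt (fun x => log (r / x)) r := by fun_prop (disch := positivity)
      simpa using this.tendsto.mono_left nhdsWithin_le_nhds
    · filter_upwards [Ioo_mem_nhdsLT hr] with x hx
      exact log_pos ((one_lt_div hx.1).2 hx.2)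
  refine Tendsto.pos_mul_atTop (pow_pos hr m) ?_ (Tendsto.add_atTop (C := 2 * C₀ * r ^ α) ?_ ?_)
  · exact ((continuous_pow m).tendsto r).mono_left nhdsWithin_le_nhds
  · exact ((continuousAt_rpow_const r α (Or.inl hr.ne')).tendsto.const_mul _).mono_left
      nhdsWithin_le_nhds
  · exact ((tendsto_rpow_neg_nhdsGT_zero (by simpa using hγ)).comp hlog).const_mul_atTop hK

variable {ε : ℝ}

theorem barrierDeriv_le (hm : 1 ≤ m) (hγ : 0 < γ) (hε : 0 ≤ ε) (hC₀ : 0 ≤ C₀) (hα : 0 < α)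
    (hK : 0 < K) (hK₁ : 1 / γ ≤ ε / 2 * K ^ γ)
    (hK₂ : C₀ * (1 + 2 * α) * ((1 + 1 / γ) / α) ^ (1 + 1 / γ) ≤ ε / 2 * K ^ (1 + γ))
    {x g : ℝ} (hx : 0 < x) (hxr : x < r) (hr : r ≤ 1)
    (hg : C₀ * x ^ α + K * log (r / x) ^ (-(1 / γ)) ≤ g) :
    barrierDeriv m C₀ α K γ r x ≤ x ^ m / x * (m * (g + ε * g ^ (1 + γ))) := by
  set s := log (r / x)
  set q := 1 + 1 / γ
  set M := (q / α) ^ q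
  have hs : 0 < s := log_pos ((one_lt_div hx).2 hxr)
  have hq : 0 < q := by positivity
  have hm' : (1 : ℝ) ≤ m := by exact_mod_cast hm
  have hP : 0 < s ^ (-q) := rpow_pos_of_pos hs _
  have hxα : x ^ α ≤ M * s ^ (-q) := by
    have h := (rpow_mul_log_div_rpow_le hx hxr.le hα hq).trans
      (mul_le_of_le_one_right (by positivity) (rpow_le_one (hx.trans hxr).le hr hα.le))
    rwa [rpow_neg hs.le, ← div_eq_mul_inv, le_div_iff₀ (rpow_pos_of_pos hs _)]
  have hgq : K ^ (1 + γ) * s ^ (-q) ≤ g ^ (1 + γ) := by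
    calc K ^ (1 + γ) * s ^ (-q) = (K * s ^ (-(1 / γ))) ^ (1 + γ) := by
          rw [mul_rpow hK.le (rpow_nonneg hs.le _), ← rpow_mul hs.le]
          congr 2
          simp only [q]
          field_simp
          ring
      _ ≤ g ^ (1 + γ) := by
          gcongr
          linarith [mul_nonneg hC₀ (rpow_nonneg hx.le α)]
  have hsq : s ^ (-(1 / γ) - 1) = s ^ (-q) := by congr 1; ring
  have hKsplit : K ^ (1 + γ) = K * K ^ γ := by rw [rpow_add hK, rpow_one]
  have hlin : C₀ * (m + 2 * α) * x ^ α ≤ m * (ε / 2 * K ^ (1 + γ)) * s ^ (-q) := by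
    calc C₀ * (m + 2 * α) * x ^ α ≤ C₀ * (m * (1 + 2 * α)) * (M * s ^ (-q)) := by
          gcongr
          nlinarith
      _ = m * (C₀ * (1 + 2 * α) * M) * s ^ (-q) := by ring
      _ ≤ m * (ε / 2 * K ^ (1 + γ)) * s ^ (-q) := by gcongr
  have hpow : K * (s ^ (-q) / γ) ≤ m * (ε / 2 * K ^ (1 + γ)) * s ^ (-q) := by
    calc K * (s ^ (-q) / γ) = K * (1 / γ) * s ^ (-q) := by ring
      _ ≤ K * (ε / 2 * K ^ γ) * s ^ (-q) := by gcongr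
      _ = 1 * (ε / 2 * K ^ (1 + γ)) * s ^ (-q) := by rw [hKsplit]; ring
      _ ≤ m * (ε / 2 * K ^ (1 + γ)) * s ^ (-q) := by gcongr
  unfold barrierDeriv
  rw [hsq]
  gcongr _ * ?_
  nlinarith [mul_le_mul_of_nonneg_left hgq (by positivity : (0 : ℝ) ≤ m * ε),
    mul_le_mul_of_nonneg_left hg (by positivity : (0 : ℝ) ≤ m)]

theorem barrierDeriv_le_of_barrier_le (hm : 1 ≤ m) (hγ : 0 < γ) (hε : 0 ≤ ε) (hC₀ : 0 ≤ C₀)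
    (hα : 0 < α) (hK : 0 < K) (hK₁ : 1 / γ ≤ ε / 2 * K ^ γ)
    (hK₂ : C₀ * (1 + 2 * α) * ((1 + 1 / γ) / α) ^ (1 + 1 / γ) ≤ ε / 2 * K ^ (1 + γ))
    {x y D : ℝ} (hx : 0 < x) (hxr : x < r) (hr : r ≤ 1) (hD : 0 ≤ D)
    (hβ : barrier m C₀ α K γ r x ≤ y)
    (h : y ≤ (1 - ε * |y / x ^ m - C₀ * x ^ α| ^ γ) * (x / m) * D + C₀ * x ^ ((m : ℝ) + α)) :
    barrierDeriv m C₀ α K γ r x ≤ D := by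
  set g := y / x ^ m - C₀ * x ^ α
  have hxm : 0 < x ^ m := pow_pos hx m
  have hm' : (0 : ℝ) < m := by exact_mod_cast hm
  have hs : 0 < log (r / x) := log_pos ((one_lt_div hx).2 hxr)
  have hg : C₀ * x ^ α + K * log (r / x) ^ (-(1 / γ)) ≤ g := by
    rw [le_sub_iff_add_le, le_div_iff₀ hxm]
    unfold barrier at hβ
    linarith
  have hg0 : 0 < g := lt_of_lt_of_le (by positivity) hg
  have hy : y = x ^ m * g + C₀ * x ^ ((m : ℝ) + α) := by
    rw [rpow_add hx, rpow_natCast]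
    simp only [g]
    field_simp
    ring
  rw [abs_of_pos hg0, hy, mul_assoc] at h
  have key := mul_one_add_le_of_le_one_sub_mul (δ := ε * g ^ γ) (D := x / m * D)
    (mul_pos hxm hg0) (by positivity) (by linarith)
  calc barrierDeriv m C₀ α K γ r x ≤ x ^ m / x * (m * (g + ε * g ^ (1 + γ))) :=
        barrierDeriv_le hm hγ hε hC₀ hα hK hK₁ hK₂ hx hxr hr hg
    _ = m / x * (x ^ m * g * (1 + ε * g ^ γ)) := by
        rw [rpow_add hg0, rpow_one]
        ring
    _ ≤ m / x * (x / m * D) := by gcongr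
    _ = D := by field_simp

theorem barrier_le_of_lt (hC₀ : 0 ≤ C₀) (hα : 0 < α) (hγ : 0 < γ) {ρ R : ℝ}
    (hρ : 0 < ρ) (hρR : ρ < R) (hR : R ≤ 1) :
    barrier m C₀ α K γ (ρ * exp (log (R / ρ) / 2)) ρ ≤
      ρ ^ m * ((2 * C₀ * (1 / γ / α) ^ (1 / γ) + K * 2 ^ (1 / γ)) * log (R / ρ) ^ (-(1 / γ))) := by
  set L := log (R / ρ)
  have hL : 0 < L := log_pos ((one_lt_div hρ).2 hρR)
  have hρα : ρ ^ α ≤ (1 / γ / α) ^ (1 / γ) * L ^ (-(1 / γ)) := by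
    have h := (rpow_mul_log_div_rpow_le hρ hρR.le hα (one_div_pos.2 hγ)).trans
      (mul_le_of_le_one_right (by positivity) (rpow_le_one (hρ.trans hρR).le hR hα.le))
    rwa [rpow_neg hL.le, ← div_eq_mul_inv, le_div_iff₀ (rpow_pos_of_pos hL _)]
  have hhalf : (L / 2) ^ (-(1 / γ)) = 2 ^ (1 / γ) * L ^ (-(1 / γ)) := by
    rw [div_rpow hL.le zero_le_two, rpow_neg zero_le_two, div_eq_mul_inv, inv_inv, mul_comm]
  unfold barrier
  rw [mul_div_cancel_left₀ _ hρ.ne', log_exp, hhalf]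
  gcongr ρ ^ m * ?_
  nlinarith [mul_le_mul_of_nonneg_left hρα (by positivity : (0 : ℝ) ≤ 2 * C₀)]

theorem div_pow_le_of_log_epiperimetric (hm : 1 ≤ m) (hγ : 0 < γ) (hε : 0 ≤ ε) (hC₀ : 0 ≤ C₀)
    (hα : 0 < α) (hK : 0 < K) (hK₁ : 1 / γ ≤ ε / 2 * K ^ γ)
    (hK₂ : C₀ * (1 + 2 * α) * ((1 + 1 / γ) / α) ^ (1 + 1 / γ) ≤ ε / 2 * K ^ (1 + γ))
    {R ρ : ℝ} {f : ℝ → ℝ} (hR : R ≤ 1) (hρ : 0 < ρ) (hρR : 2 * ρ ≤ R)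
    (hf : MonotoneOn f (Ioc 0 R))
    (hae : ∀ᵐ x, x ∈ Ioo 0 R →
      f x ≤ (1 - ε * |f x / x ^ m - C₀ * x ^ α| ^ γ) * (x / m) * deriv f x
        + C₀ * x ^ ((m : ℝ) + α)) :
    f ρ / ρ ^ m ≤
      (2 * C₀ * (1 / γ / α) ^ (1 / γ) + K * 2 ^ (1 / γ)) * log (R / ρ) ^ (-(1 / γ)) := by
  have hρR' : ρ < R := by linarith
  set L := log (R / ρ)
  set r := ρ * exp (L / 2)
  have hL : 0 < L := log_pos ((one_lt_div hρ).2 hρR')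
  have hρr : ρ < r := lt_mul_of_one_lt_right hρ (one_lt_exp_iff.2 (half_pos hL))
  have hrR : r < R := by
    calc r = ρ * exp (L / 2) := rfl
      _ < ρ * exp L := by gcongr; linarith
      _ = R := by rw [exp_log (div_pos (hρ.trans hρR') hρ)]; field_simp
  by_contra! hcon
  have hstart : barrier m C₀ α K γ r ρ < f ρ := by
    refine (barrier_le_of_lt hC₀ hα hγ hρ hρR' hR).trans_lt ?_
    rwa [← lt_div_iff₀' (pow_pos hρ m)]
  obtain ⟨c, hfc, hρc, hcr⟩ : ∃ c, f R < barrier m C₀ α K γ r c ∧ ρ < c ∧ c < r :=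
    (((tendsto_barrier_nhdsLT (hρ.trans hρr) hK hγ).eventually_gt_atTop (f R)).and
      (Ioo_mem_nhdsLT hρr)).exists
  have hIcc : Icc ρ c ⊆ Ioc 0 R := fun x hx => ⟨hρ.trans_le hx.1, by linarith [hx.2]⟩
  have hcross : barrier m C₀ α K γ r c ≤ f c := by
    refine (hf.mono hIcc).le_of_hasDerivAt_le_deriv hρc.le
      (fun x hx => hasDerivAt_barrier (hρ.trans_le hx.1) (hx.2.trans_lt hcr))
      ((continuousOn_barrierDeriv hρ hcr).intervalIntegrable_of_Icc hρc.le) ?_ hstart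
    filter_upwards [hae] with x hx hxc hβx
    have hxR : x ∈ Ioo 0 R := ⟨hρ.trans hxc.1, by linarith [hxc.2]⟩
    have hD : 0 ≤ deriv f x := by
      rw [← derivWithin_of_mem_nhds
        (mem_of_superset (Ioo_mem_nhds hxR.1 hxR.2) Ioo_subset_Ioc_self)]
      exact hf.derivWithin_nonneg
    exact barrierDeriv_le_of_barrier_le hm hγ hε hC₀ hα hK hK₁ hK₂ hxR.1 (hxc.2.trans hcr)
      (hrR.le.trans hR) hD hβx (hx hxR)
  linarith [hf (hIcc ⟨hρc.le, le_rfl⟩) ⟨hρ.trans hρR', le_rfl⟩ (by linarith : c ≤ R)]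

end Barrier

theorem exists_barrier_constant {γ ε : ℝ} (hγ : 0 < γ) (hε : 0 < ε) (B : ℝ) :
    ∃ K, 0 < K ∧ 1 / γ ≤ ε / 2 * K ^ γ ∧ B ≤ ε / 2 * K ^ (1 + γ) := by
  set A := max 1 (max (2 / (ε * γ)) (2 * B / ε))
  have hA : 1 ≤ A := le_max_left _ _
  have hKγ : (A ^ (1 / γ)) ^ γ = A := by
    rw [← rpow_mul (by positivity), one_div_mul_cancel hγ.ne', rpow_one]
  have hK : 1 ≤ A ^ (1 / γ) := one_le_rpow hA (by positivity)
  have h₁ : 2 / (ε * γ) ≤ A := (le_max_left _ _).trans (le_max_right _ _)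
  have h₂ : 2 * B / ε ≤ A := (le_max_right _ _).trans (le_max_right _ _)
  refine ⟨A ^ (1 / γ), by positivity, ?_, ?_⟩
  · calc 1 / γ = ε / 2 * (2 / (ε * γ)) := by field_simp
      _ ≤ ε / 2 * (A ^ (1 / γ)) ^ γ := by rw [hKγ]; gcongr
  · calc B = ε / 2 * (2 * B / ε) := by field_simp
      _ ≤ ε / 2 * (A ^ (1 / γ) * A) := by
          gcongr
          exact h₂.trans (le_mul_of_one_le_left (by positivity) hK)
      _ = ε / 2 * (A ^ (1 / γ)) ^ (1 + γ) := by rw [rpow_add (by positivity), rpow_one, hKγ]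

/-- The real-variable lemma of Section 5 converting the log-epiperimetric inequality
(with almost-minimality error `C₀ ρ^{α₀}`) into logarithmic decay of the energy density:
there is a constant `C > 0` depending only on `n, γ, ε, C₀, α₀` such that whenever
`f : (0, ρ̃] → [0, ∞)` is nondecreasing (`ρ̃ ∈ (0,1]`), `e(ρ) := f(ρ)/ρ^{n-4}`, and for
a.e. `ρ ∈ (0, ρ̃)` the function `f` is differentiable at `ρ` with
`f(ρ) ≤ (1 - ε |e(ρ) - C₀ρ^{α₀}|^γ) (ρ/(n-4)) f'(ρ) + C₀ ρ^{n-4+α₀}`,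
then `e(ρ) ≤ C (log(ρ̃/ρ))^{-1/γ}` on `(0, ρ̃/2]`. -/
theorem stmt_5 (n : ℕ) (hn : 5 ≤ n) (γ ε C₀ α₀ : ℝ)
    (hγ : γ ∈ Set.Ioo (0 : ℝ) 1) (hε : ε ∈ Set.Ioo (0 : ℝ) 1) (hC₀ : 0 < C₀)
    (hα₀ : 0 < α₀) :
    ∃ C : ℝ, 0 < C ∧
      ∀ R ∈ Set.Ioc (0 : ℝ) 1, ∀ f : ℝ → ℝ,
        (∀ ρ ∈ Set.Ioc (0 : ℝ) R, 0 ≤ f ρ) → MonotoneOn f (Set.Ioc 0 R) →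
        (∀ᵐ ρ ∂(volume : Measure ℝ), ρ ∈ Set.Ioo (0 : ℝ) R →
          DifferentiableAt ℝ f ρ ∧
            f ρ ≤ (1 - ε * |f ρ / ρ ^ (n - 4) - C₀ * ρ ^ α₀| ^ γ) * (ρ / ((n : ℝ) - 4))
                    * deriv f ρ
                  + C₀ * ρ ^ ((n : ℝ) - 4 + α₀)) →
        ∀ ρ ∈ Set.Ioc (0 : ℝ) (R / 2),
          f ρ / ρ ^ (n - 4) ≤ C * Real.log (R / ρ) ^ (-(1 / γ)) := by
  obtain ⟨hγ0, -⟩ := hγ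
  obtain ⟨hε0, -⟩ := hε
  obtain ⟨K, hK, hK₁, hK₂⟩ := exists_barrier_constant hγ0 hε0
    (C₀ * (1 + 2 * α₀) * ((1 + 1 / γ) / α₀) ^ (1 + 1 / γ))
  refine ⟨2 * C₀ * (1 / γ / α₀) ^ (1 / γ) + K * 2 ^ (1 / γ), by positivity, ?_⟩
  rintro R ⟨-, hR⟩ f - hf hae ρ ⟨hρ, hρR⟩
  have hm : ((n - 4 : ℕ) : ℝ) = n - 4 := by push_cast [show 4 ≤ n by omega]; ring
  refine div_pow_le_of_log_epiperimetric (by omega) hγ0 hε0.le hC₀.le hα₀ hK hK₁ hK₂ hR hρ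
    (by linarith) hf ?_
  filter_upwards [hae] with x hx hxR
  rw [hm]
  exact (hx hxR).2
end

section
/- Let n ≥ 1 be an integer, ρ₀ > 0, h : ℝ^n → [0, ∞] Lebesgue measurable, φ : (0, ρ₀) → (0, ∞) nondecreasing, and C > 0. Assume that for all 0 < σ < ρ < ρ₀ one has ∫_{{σ < ‖x‖ < ρ}} ‖x‖^{2−n} · h(x) dx ≤ C · ( log(ρ/σ) · φ(ρ) )^{1/2}. Then there exists a constant C′ > 0, depending only on C, such that for every ρ ∈ (0, ρ₀/2): ∫_{{0 < ‖x‖ < ρ}} ‖x‖^{2−n} · h(x) dx ≤ C′ · ∫₀^{2ρ} (φ(t)^{1/2}/t) dt (where both sides may equal +∞). -/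
/-!
Cut the punctured ball `0 < ‖x‖ < ρ` into the dyadic annuli `ρ / 2 ^ (i + 1) < ‖x‖ < ρ / 2 ^ i`;
the spheres between them are null. The hypothesis with `ρ / σ = 2` bounds the `i`-th annulus by
`C φ(ρ / 2 ^ i) ^ (1/2)` because `log 2 ≤ 1`, and since `φ` is nondecreasing this is at most the
integral of `2 C φ(t) ^ (1/2) / t` over `(ρ / 2 ^ i, 2 ρ / 2 ^ i]`. These intervals tile `(0, 2ρ]`.
-/

open MeasureTheory Set Function

open scoped ENNReal

section Dyadic

variable {R : ℝ}

theorem div_two_pow_mem_Ioc (hR : 0 < R) (i : ℕ) : R / 2 ^ i ∈ Ioc 0 R :=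
  ⟨by positivity, div_le_self hR.le (one_le_pow₀ one_le_two)⟩

theorem antitone_div_two_pow (hR : 0 ≤ R) : Antitone fun i : ℕ => R / 2 ^ i :=
  fun _ _ hij => div_le_div_of_nonneg_left hR (by positivity) (pow_le_pow_right₀ one_le_two hij)

theorem pairwise_disjoint_Ioc_div_two_pow (hR : 0 ≤ R) :
    Pairwise (Disjoint on fun i : ℕ => Ioc (R / 2 ^ (i + 1)) (R / 2 ^ i)) := by
  simpa using (antitone_div_two_pow hR).pairwise_disjoint_on_Ioc_succ

theorem iUnion_Ioc_div_two_pow (hR : 0 < R) :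
    ⋃ i : ℕ, Ioc (R / 2 ^ (i + 1)) (R / 2 ^ i) = Ioc 0 R := by
  ext r
  simp only [mem_iUnion, mem_Ioc]
  constructor
  · rintro ⟨i, hri, hrR⟩
    exact ⟨lt_of_le_of_lt (by positivity) hri, hrR.trans (div_two_pow_mem_Ioc hR i).2⟩
  · rintro ⟨hr, hrR⟩
    obtain ⟨i, hle, hlt⟩ := exists_nat_pow_near ((one_le_div hr).2 hrR) one_lt_two
    refine ⟨i, ?_, ?_⟩
    · rwa [div_lt_iff₀ (by positivity), mul_comm, ← div_lt_iff₀ hr]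
    · rwa [le_div_iff₀ (by positivity), mul_comm, ← le_div_iff₀ hr]

theorem setLIntegral_preimage_Ioc_eq_tsum_div_two_pow {X : Type*} [MeasurableSpace X]
    {μ : Measure X} {g : X → ℝ} (hg : Measurable g) (f : X → ℝ≥0∞) (hR : 0 < R) :
    ∫⁻ x in g ⁻¹' Ioc 0 R, f x ∂μ =
      ∑' i : ℕ, ∫⁻ x in g ⁻¹' Ioc (R / 2 ^ (i + 1)) (R / 2 ^ i), f x ∂μ := by
  rw [← iUnion_Ioc_div_two_pow hR, preimage_iUnion]
  exact lintegral_iUnion (fun _ => hg measurableSet_Ioc)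
    ((pairwise_disjoint_Ioc_div_two_pow hR.le).mono fun _ _ h => h.preimage g) f

end Dyadic

section Annuli

variable {E : Type*} [NormedAddCommGroup E] [NormedSpace ℝ E] [MeasurableSpace E] [BorelSpace E]
  [FiniteDimensional ℝ E] (μ : Measure E) [μ.IsAddHaarMeasure] (f : E → ℝ≥0∞)

theorem setLIntegral_norm_preimage_Ioc_eq_Ioo (a : ℝ) {b : ℝ} (hb : b ≠ 0) :
    ∫⁻ x in (‖·‖) ⁻¹' Ioc a b, f x ∂μ = ∫⁻ x in (‖·‖) ⁻¹' Ioo a b, f x ∂μ := by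
  refine setLIntegral_congr (ae_eq_set.2 ⟨measure_mono_null ?_ (μ.addHaar_sphere_of_ne_zero 0 hb),
    by simp [sdiff_eq_empty.2 (preimage_mono Ioo_subset_Ioc_self)]⟩)
  rintro x ⟨⟨hax, hxb⟩, hx⟩
  simp only [mem_preimage, mem_Ioo, not_and_or, not_lt] at hx
  exact mem_sphere_zero_iff_norm.2 (le_antisymm hxb (hx.resolve_left hax.not_ge))

theorem setLIntegral_punctured_ball_le_tsum_annuli {ρ : ℝ} (hρ : 0 < ρ) :
    ∫⁻ x in {x : E | 0 < ‖x‖ ∧ ‖x‖ < ρ}, f x ∂μ ≤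
      ∑' i : ℕ, ∫⁻ x in (‖·‖) ⁻¹' Ioo (ρ / 2 ^ (i + 1)) (ρ / 2 ^ i), f x ∂μ :=
  calc ∫⁻ x in {x : E | 0 < ‖x‖ ∧ ‖x‖ < ρ}, f x ∂μ
      ≤ ∫⁻ x in (‖·‖) ⁻¹' Ioc 0 ρ, f x ∂μ := lintegral_mono_set fun x hx => ⟨hx.1, hx.2.le⟩
    _ = ∑' i : ℕ, ∫⁻ x in (‖·‖) ⁻¹' Ioc (ρ / 2 ^ (i + 1)) (ρ / 2 ^ i), f x ∂μ :=
        setLIntegral_preimage_Ioc_eq_tsum_div_two_pow continuous_norm.measurable f hρ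
    _ = ∑' i : ℕ, ∫⁻ x in (‖·‖) ⁻¹' Ioo (ρ / 2 ^ (i + 1)) (ρ / 2 ^ i), f x ∂μ := by
        congr 1 with i
        exact setLIntegral_norm_preimage_Ioc_eq_Ioo μ f _ (div_two_pow_mem_Ioc hρ i).1.ne'

end Annuli

theorem ofReal_mul_le_setLIntegral_Ioc_two_mul {C a : ℝ} (hC : 0 ≤ C) (ha : 0 < a)
    {ψ : ℝ → ℝ} (hψa : 0 ≤ ψ a) (hψ : ∀ t ∈ Ioc a (2 * a), ψ a ≤ ψ t) :
    ENNReal.ofReal (C * ψ a) ≤ ∫⁻ t in Ioc a (2 * a), ENNReal.ofReal (2 * C * ψ t / t) :=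
  calc ENNReal.ofReal (C * ψ a)
      = ∫⁻ _ in Ioc a (2 * a), ENNReal.ofReal (2 * C * ψ a / (2 * a)) := by
        rw [setLIntegral_const, Real.volume_Ioc, ← ENNReal.ofReal_mul (by positivity)]
        congr 1
        field_simp
        ring
    _ ≤ ∫⁻ t in Ioc a (2 * a), ENNReal.ofReal (2 * C * ψ t / t) := by
        refine setLIntegral_mono' measurableSet_Ioc fun t ht => ENNReal.ofReal_le_ofReal ?_
        have hψt := hψ t ht
        exact div_le_div₀ (mul_nonneg (by positivity) (hψa.trans hψt)) (by gcongr) (ha.trans ht.1)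
          ht.2

theorem tsum_ofReal_le_setLIntegral_Ioc_two_mul {C ρ : ℝ} (hC : 0 ≤ C) (hρ : 0 < ρ)
    {ψ : ℝ → ℝ} (hψ₀ : ∀ t ∈ Ioc 0 (2 * ρ), 0 ≤ ψ t) (hψ : MonotoneOn ψ (Ioc 0 (2 * ρ))) :
    ∑' i : ℕ, ENNReal.ofReal (C * ψ (ρ / 2 ^ i)) ≤
      ∫⁻ t in Ioc 0 (2 * ρ), ENNReal.ofReal (2 * C * ψ t / t) :=
  calc ∑' i : ℕ, ENNReal.ofReal (C * ψ (ρ / 2 ^ i))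
      ≤ ∑' i : ℕ, ∫⁻ t in Ioc (2 * ρ / 2 ^ (i + 1)) (2 * ρ / 2 ^ i),
          ENNReal.ofReal (2 * C * ψ t / t) := by
        refine ENNReal.tsum_le_tsum fun i => ?_
        obtain ⟨hi₀, hiρ⟩ := div_two_pow_mem_Ioc hρ i
        have hi : ρ / 2 ^ i ∈ Ioc 0 (2 * ρ) := ⟨hi₀, by linarith⟩
        have hlo : 2 * ρ / 2 ^ (i + 1) = ρ / 2 ^ i := by
          rw [pow_succ]
          field_simp
        rw [hlo, mul_div_assoc]
        exact ofReal_mul_le_setLIntegral_Ioc_two_mul hC hi₀ (hψ₀ _ hi) fun t ht =>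
          hψ hi ⟨hi₀.trans ht.1, ht.2.trans (by linarith)⟩ ht.1.le
    _ = ∫⁻ t in Ioc 0 (2 * ρ), ENNReal.ofReal (2 * C * ψ t / t) :=
        (setLIntegral_preimage_Ioc_eq_tsum_div_two_pow measurable_id _ (by positivity)).symm

/-- Dyadic-decomposition estimate (equation (A.5) in the appendix): if for all
`0 < σ < ρ < ρ₀` one has `∫_{σ<‖x‖<ρ} ‖x‖^{2-n} h ≤ C (log(ρ/σ) φ(ρ))^{1/2}` with `φ`
positive and nondecreasing on `(0, ρ₀)`, then there is `C' > 0`, depending only on `C`,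
such that `∫_{0<‖x‖<ρ} ‖x‖^{2-n} h ≤ C' ∫₀^{2ρ} φ(t)^{1/2}/t dt` for every
`ρ ∈ (0, ρ₀/2)` (both sides may equal `+∞`). -/
theorem stmt_8 (C : ℝ) (hC : 0 < C) :
    ∃ C' : ℝ, 0 < C' ∧
      ∀ (n : ℕ), 1 ≤ n → ∀ ρ₀ : ℝ, 0 < ρ₀ →
      ∀ h : EuclideanSpace ℝ (Fin n) → ENNReal, Measurable h →
      ∀ φ : ℝ → ℝ, (∀ t ∈ Set.Ioo (0 : ℝ) ρ₀, 0 < φ t) → MonotoneOn φ (Set.Ioo 0 ρ₀) →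
      (∀ σ ρ : ℝ, 0 < σ → σ < ρ → ρ < ρ₀ →
        ∫⁻ x in {x : EuclideanSpace ℝ (Fin n) | σ < ‖x‖ ∧ ‖x‖ < ρ},
            ENNReal.ofReal (‖x‖ ^ ((2 : ℝ) - n)) * h x
          ≤ ENNReal.ofReal (C * (Real.log (ρ / σ) * φ ρ) ^ ((1 : ℝ) / 2))) →
      ∀ ρ ∈ Set.Ioo (0 : ℝ) (ρ₀ / 2),
        ∫⁻ x in {x : EuclideanSpace ℝ (Fin n) | 0 < ‖x‖ ∧ ‖x‖ < ρ},
            ENNReal.ofReal (‖x‖ ^ ((2 : ℝ) - n)) * h x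
          ≤ ∫⁻ t in Set.Ioc (0 : ℝ) (2 * ρ),
              ENNReal.ofReal (C' * φ t ^ ((1 : ℝ) / 2) / t) := by
  refine ⟨2 * C, by positivity, ?_⟩
  intro n _ ρ₀ _ h _ φ hφpos hφmono hyp ρ ⟨hρ, hρρ₀⟩
  have hsub : Ioc 0 (2 * ρ) ⊆ Ioo 0 ρ₀ := fun t ht => ⟨ht.1, by linarith [ht.2]⟩
  have annulus : ∀ i : ℕ, ∫⁻ x in (‖·‖) ⁻¹' Ioo (ρ / 2 ^ (i + 1)) (ρ / 2 ^ i),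
      ENNReal.ofReal (‖x‖ ^ ((2 : ℝ) - n)) * h x
        ≤ ENNReal.ofReal (C * φ (ρ / 2 ^ i) ^ (1 / 2 : ℝ)) := by
    intro i
    obtain ⟨hi₀, hiρ⟩ := div_two_pow_mem_Ioc hρ i
    have hratio : ρ / 2 ^ i / (ρ / 2 ^ (i + 1)) = 2 := by
      rw [pow_succ]
      field_simp
    have hlog : Real.log 2 ≤ 1 := (Real.log_two_lt_d9.trans (by norm_num)).le
    have hφi := hφpos _ (hsub ⟨hi₀, by linarith⟩)
    refine (hyp _ _ (by positivity) (by gcongr <;> norm_num) (by linarith)).trans ?_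
    rw [hratio]
    gcongr
    nlinarith
  calc _ ≤ _ := setLIntegral_punctured_ball_le_tsum_annuli volume _ hρ
    _ ≤ _ := ENNReal.tsum_le_tsum annulus
    _ ≤ _ := tsum_ofReal_le_setLIntegral_Ioc_two_mul (ψ := fun t => φ t ^ (1 / 2 : ℝ)) hC.le hρ
        (fun t ht => Real.rpow_nonneg (hφpos t (hsub ht)).le _)
        fun s hs t ht hst => Real.rpow_le_rpow (hφpos s (hsub hs)).le
          (hφmono (hsub hs) (hsub ht) hst) (by norm_num)
end
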